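/- arXiv:0811.2689 — 8 statements merged into one kernel-verified Lean document; each statement's English description precedes it below -/
import Mathlib

section
/- Let L be a finite-dimensional Lie algebra over a field F, let B be a c-ideal of L, and let K be a subalgebra of L with B ≤ K ≤ L. Then B is a c-ideal of K. -/
/-! Common definitions: c-ideals and related notions for Lie algebras
(following D. Towers, "C-ideals of Lie algebras"). -/

section Defs

variable (F : Type*) {L : Type*} [Field F] [LieRing L] [LieAlgebra F L]

/-- `B` is a *c-ideal* of `L`: there is an ideal `C` of `L` with `L = B + C` and
`B ∩ C ≤ B_L`, where `B_L` is the largest ideal of `L` contained in `B`; equivalently,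
`B ∩ C` is contained in some ideal `D` of `L` with `D ≤ B`. -/
def IsCIdeal (B : LieSubalgebra F L) : Prop :=
  ∃ C : LieIdeal F L,
    B.toSubmodule ⊔ (C : Submodule F L) = ⊤ ∧
    ∃ D : LieIdeal F L, (∀ x ∈ D, x ∈ B) ∧ ∀ x ∈ B, x ∈ C → x ∈ D

/-- A maximal subalgebra of `L`: proper, and maximal among proper subalgebras. -/
def IsMaximalSubalgebra (M : LieSubalgebra F L) : Prop :=
  M ≠ ⊤ ∧ ∀ K : LieSubalgebra F L, M < K → K = ⊤

/-- `B` is a maximal subalgebra of the subalgebra `C`: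
`B` is a proper subalgebra of `C`, maximal among proper subalgebras contained in `C`. -/
def IsMaximalSubalgebraOf (B C : LieSubalgebra F L) : Prop :=
  B < C ∧ ∀ K : LieSubalgebra F L, B < K → K ≤ C → K = C

/-- A maximal nilpotent subalgebra of `L`:
nilpotent and maximal among nilpotent subalgebras. -/
def IsMaximalNilpotentSubalgebra (C : LieSubalgebra F L) : Prop :=
  LieRing.IsNilpotent C ∧
    ∀ D : LieSubalgebra F L, LieRing.IsNilpotent D → C ≤ D → C = D

/-- The natural quotient map `L → L ⧸ I` as a morphism of Lie algebras. -/
def quotMk (I : LieIdeal F L) : L →ₗ⁅F⁆ L ⧸ I :=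
  { (LieSubmodule.Quotient.mk' I).toLinearMap with
    map_lie' := fun {_ _} => rfl }

/-- A supersolvable Lie algebra: there is a chain of ideals `0 = L_0 ⊆ ⋯ ⊆ L_n = L`
with `dim L_i = i` for each `0 ≤ i ≤ n`. -/
def IsSupersolvable (L : Type*) [LieRing L] [LieAlgebra F L] : Prop :=
  ∃ (n : ℕ) (c : ℕ → LieIdeal F L), Monotone c ∧ c 0 = ⊥ ∧ c n = ⊤ ∧
    ∀ i ≤ n, Module.finrank F (c i) = i

/-- A minimal abelian ideal of `L`: a nonzero abelian ideal `A` such that the only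
ideals of `L` contained in `A` are `0` and `A`. -/
def IsMinimalAbelianIdeal (A : LieIdeal F L) : Prop :=
  A ≠ ⊥ ∧ IsLieAbelian A ∧ ∀ I : LieIdeal F L, I ≤ A → I = ⊥ ∨ I = A

/-- The one-dimensional subspace spanned by `x`, as a Lie subalgebra
(it is closed under the bracket since `⁅x,x⁆ = 0`). -/
def lineSpan (x : L) : LieSubalgebra F L :=
  { Submodule.span F {x} with
    lie_mem' := by
      intro a b ha hb
      replace ha : a ∈ Submodule.span F {x} := ha
      replace hb : b ∈ Submodule.span F {x} := hb
      rw [Submodule.mem_span_singleton] at ha hb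
      obtain ⟨c, rfl⟩ := ha
      obtain ⟨d, rfl⟩ := hb
      show ⁅c • x, d • x⁆ ∈ Submodule.span F {x}
      simp }

/-- The Frattini subalgebra of a Lie algebra: the intersection of all maximal subalgebras. -/
def frattiniSubalgebra (L : Type*) [LieRing L] [LieAlgebra F L] : LieSubalgebra F L :=
  sInf {M : LieSubalgebra F L | IsMaximalSubalgebra F M}

/-- An almost abelian Lie algebra `K`: `K = K² ⊕ Fx` for some `x ∈ K`, where the derived
subalgebra `K²` is abelian and `⁅x, y⁆ = y` for all `y ∈ K²`. -/
def IsAlmostAbelian (K : Type*) [LieRing K] [LieAlgebra F K] : Prop :=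
  ∃ x : K, IsLieAbelian (LieAlgebra.derivedSeries F K 1) ∧
    (∀ y ∈ LieAlgebra.derivedSeries F K 1, ⁅x, y⁆ = y) ∧
    (LieAlgebra.derivedSeries F K 1 : Submodule F K) ⊔ Submodule.span F {x} = ⊤ ∧
    (LieAlgebra.derivedSeries F K 1 : Submodule F K) ⊓ Submodule.span F {x} = ⊥

end Defs

theorem Submodule.comap_sup_comap_eq_top {R M N : Type*} [Semiring R] [AddCommGroup M]
    [Module R M] [AddCommGroup N] [Module R N] (f : M →ₗ[R] N) {p q : Submodule R N}
    (hp : p ≤ LinearMap.range f) (hpq : p ⊔ q = ⊤) : p.comap f ⊔ q.comap f = ⊤ := by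
  refine eq_top_iff.mpr fun x _ => ?_
  obtain ⟨y, hy, z, hz, hyz⟩ := Submodule.mem_sup.mp (hpq ▸ Submodule.mem_top : f x ∈ p ⊔ q)
  obtain ⟨x', rfl⟩ := hp hy
  have hz' : f (x - x') = z := by rw [map_sub, ← hyz, add_sub_cancel_left]
  exact Submodule.mem_sup.mpr
    ⟨x', hy, x - x', by rwa [Submodule.mem_comap, hz'], add_sub_cancel x' x⟩

theorem IsCIdeal.comap {F K L : Type*} [Field F] [LieRing K] [LieAlgebra F K] [LieRing L]
    [LieAlgebra F L] {B : LieSubalgebra F L} (hB : IsCIdeal F B) (f : K →ₗ⁅F⁆ L)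
    (hf : B ≤ f.range) : IsCIdeal F (B.comap f) := by
  obtain ⟨C, hBC, D, hDB, hBCD⟩ := hB
  refine ⟨C.comap f, ?_, D.comap f, fun x hx => hDB _ hx, fun x hxB hxC => hBCD _ hxB hxC⟩
  exact Submodule.comap_sup_comap_eq_top (f : K →ₗ[F] L) hf hBC

theorem isCIdeal_of_le_general {F L : Type*} [Field F] [LieRing L] [LieAlgebra F L]
    (B K : LieSubalgebra F L) (hBK : B ≤ K)
    (hB : IsCIdeal F B) : IsCIdeal F (B.comap K.incl) :=
  hB.comap K.incl (hBK.trans K.incl_range.ge)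

/-- If `B` is a c-ideal of `L` and `B ≤ K ≤ L` then `B` is a c-ideal of `K`. -/
theorem isCIdeal_of_le {F L : Type*} [Field F] [LieRing L] [LieAlgebra F L]
    [FiniteDimensional F L] (B K : LieSubalgebra F L) (hBK : B ≤ K)
    (hB : IsCIdeal F B) : IsCIdeal F (B.comap K.incl) :=
  isCIdeal_of_le_general B K hBK hB
end

section
/- Let L be a finite-dimensional Lie algebra over a field F and let B, C be subalgebras of L with B ≤ F(C), where F(C) is the Frattini subalgebra of C (the intersection of all maximal subalgebras of C). If B is a c-ideal of L then B is an ideal of L and B is contained in the Frattini ideal φ(L) of L. -/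
/-!
The Frattini subalgebra of a finite-dimensional Lie algebra consists of nongenerators: a
subalgebra which together with `F(C)` spans `C` is all of `C`. Write `L = B + C'` and
`B ∩ C' ≤ D ≤ B` with ideals `C'`, `D`. Since `B ≤ F(C)`, the modular law gives
`C = B + (C ∩ C')`, hence `C ≤ C'`, so `B = B ∩ C' = D` is an ideal. If `D` were not inside
a maximal subalgebra `M` of `L`, then `L = M + D`, hence `C = D + (C ∩ M)` and `C ≤ M`,
contradicting `D ≤ C`.
-/

section Frattini

variable {F L : Type*} [Field F] [LieRing L] [LieAlgebra F L]

theorem isMaximalSubalgebra_iff_isCoatom {M : LieSubalgebra F L} :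
    IsMaximalSubalgebra F M ↔ IsCoatom M :=
  Iff.rfl

theorem mem_frattiniSubalgebra_iff {x : L} :
    x ∈ frattiniSubalgebra F L ↔
      ∀ M : LieSubalgebra F L, IsMaximalSubalgebra F M → x ∈ M := by
  rw [frattiniSubalgebra, ← SetLike.mem_coe, LieSubalgebra.coe_sInf]
  simp only [Set.mem_iInter, SetLike.mem_coe, Set.mem_ofPred_eq]

theorem eq_top_of_frattiniSubalgebra_sup_eq_top [FiniteDimensional F L] {X : LieSubalgebra F L}
    (h : (frattiniSubalgebra F L).toSubmodule ⊔ X.toSubmodule = ⊤) : X = ⊤ := by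
  obtain hX | ⟨M, hM, hXM⟩ := IsCoatomic.eq_top_or_exists_le_coatom X
  · exact hX
  have hFM : frattiniSubalgebra F L ≤ M :=
    sInf_le ((isMaximalSubalgebra_iff_isCoatom (F := F)).mpr hM)
  refine absurd (LieSubalgebra.toSubmodule_injective ?_) hM.1
  exact top_le_iff.mp (h ▸ sup_le hFM hXM)

theorem le_of_le_sup_of_le_map_frattiniSubalgebra {C X : LieSubalgebra F L}
    [FiniteDimensional F C] {S : Submodule F L}
    (hS : S ≤ ((frattiniSubalgebra F C).map C.incl).toSubmodule)
    (hC : C.toSubmodule ≤ S ⊔ X.toSubmodule) : C ≤ X := by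
  suffices hX : X.comap C.incl = ⊤ from
    fun c hc => (LieSubalgebra.mem_comap _ _).mp (hX ▸ LieSubalgebra.mem_top (⟨c, hc⟩ : C))
  refine eq_top_of_frattiniSubalgebra_sup_eq_top (eq_top_iff.mpr fun x _ => ?_)
  obtain ⟨s, hs, y, hy, hsy⟩ := Submodule.mem_sup.mp (hC x.2)
  obtain ⟨φ, hφ, rfl⟩ := (LieSubalgebra.mem_map _ _ _).mp (hS hs)
  have hyC : y ∈ C := by
    rw [eq_sub_of_add_eq' hsy]
    exact C.sub_mem x.2 φ.2
  have hx : x = φ + ⟨y, hyC⟩ := Subtype.ext hsy.symm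
  exact hx ▸ Submodule.add_mem_sup hφ hy

def LieSubalgebra.supLieIdeal (M : LieSubalgebra F L) (I : LieIdeal F L) :
    LieSubalgebra F L where
  toSubmodule := M.toSubmodule ⊔ (I : Submodule F L)
  lie_mem' {x y} hx hy := by
    obtain ⟨m, hm, u, hu, rfl⟩ := Submodule.mem_sup.mp hx
    obtain ⟨m', hm', u', hu', rfl⟩ := Submodule.mem_sup.mp hy
    have expand : ⁅m + u, m' + u'⁆ = ⁅m, m'⁆ + (⁅m, u'⁆ + ⁅u, m' + u'⁆) := by
      rw [add_lie, lie_add]; abel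
    rw [expand]
    exact Submodule.add_mem_sup (M.lie_mem hm hm')
      (add_mem (I.lie_mem hu') (lie_mem_left F L I _ _ hu))

theorem toSubmodule_sup_eq_top_of_not_le {M : LieSubalgebra F L} (hM : IsMaximalSubalgebra F M)
    {I : LieIdeal F L} (hIM : ¬ (I : Submodule F L) ≤ M.toSubmodule) :
    M.toSubmodule ⊔ (I : Submodule F L) = ⊤ := by
  have hlt : M < M.supLieIdeal I :=
    lt_of_le_of_ne (fun _ hx => Submodule.mem_sup_left hx)
      fun h => hIM (le_sup_right.trans_eq (congrArg LieSubalgebra.toSubmodule h).symm)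
  exact congrArg LieSubalgebra.toSubmodule (hM.2 _ hlt)

theorem mem_frattiniSubalgebra_of_le_map_frattiniSubalgebra {C : LieSubalgebra F L}
    [FiniteDimensional F C] {I : LieIdeal F L}
    (hI : (I : Submodule F L) ≤ ((frattiniSubalgebra F C).map C.incl).toSubmodule)
    {x : L} (hx : x ∈ I) : x ∈ frattiniSubalgebra F L := by
  refine mem_frattiniSubalgebra_iff.mpr fun M hM => ?_
  by_contra hxM
  have hIM : ¬ (I : Submodule F L) ≤ M.toSubmodule := fun h => hxM (h hx)
  have hCM : C ≤ M := le_of_le_sup_of_le_map_frattiniSubalgebra hI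
    (by rw [sup_comm, toSubmodule_sup_eq_top_of_not_le hM hIM]; exact le_top)
  obtain ⟨y, _, rfl⟩ := (LieSubalgebra.mem_map _ _ _).mp (hI hx)
  exact hxM (hCM y.2)

end Frattini

/-- If `B ≤ F(C)` (the Frattini subalgebra of the subalgebra `C`)
and `B` is a c-ideal of `L`, then `B` is an ideal of `L` and `B ≤ φ(L)`, i.e. `B` is
contained in an ideal of `L` which lies in the Frattini subalgebra of `L`. -/
theorem isIdeal_of_isCIdeal_le_frattini {F L : Type*} [Field F] [LieRing L] [LieAlgebra F L]
    [FiniteDimensional F L] (B C : LieSubalgebra F L)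
    (hBF : B ≤ (frattiniSubalgebra F C).map C.incl)
    (hB : IsCIdeal F B) :
    (∀ x : L, ∀ b ∈ B, ⁅x, b⁆ ∈ B) ∧
      ∃ J : LieIdeal F L, (∀ x ∈ B, x ∈ J) ∧ ∀ x ∈ J, x ∈ frattiniSubalgebra F L := by
  obtain ⟨C', hBC', D, hDB, hBC'D⟩ := hB
  have hBC : B ≤ C := fun b hb => by
    obtain ⟨y, _, rfl⟩ := (LieSubalgebra.mem_map _ _ _).mp (hBF hb)
    exact y.2
  have hCC' : C ≤ (C' : LieSubalgebra F L) :=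
    le_of_le_sup_of_le_map_frattiniSubalgebra hBF (le_top.trans hBC'.ge)
  have hBD : ∀ b ∈ B, b ∈ D := fun b hb => hBC'D b hb (hCC' (hBC hb))
  exact ⟨fun x b hb => hDB _ (D.lie_mem (hBD b hb)), D, hBD,
    fun x hx => mem_frattiniSubalgebra_of_le_map_frattiniSubalgebra
      (fun y hy => hBF (hDB y hy)) hx⟩
end

section
/- Let L be a finite-dimensional Lie algebra over any field F, let A be an ideal of L, and let U be a subalgebra of L containing A such that U/A is a maximal nilpotent subalgebra of L/A. Then U = C + A where C is a maximal nilpotent subalgebra of L. -/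
/-!
Choose `B ≤ U` minimal with `B + A = U`. As `U/A` is nilpotent, for `x ∈ B` a power of `ad x`
maps `B` into `A`, so the Fitting decomposition of `ad x` on `B` gives
`B ≤ (E(x) ∩ B) + A`, where `E(x)` is the Engel subalgebra of `x`. Minimality of `B` forces
`B ≤ E(x)` for every `x ∈ B`, so `B` is nilpotent. Any maximal nilpotent `C ⊇ B` has nilpotent
image in `L/A` containing `U/A`, so the two images agree, i.e. `U = C + A`.
-/

open LieAlgebra

namespace LieHom

variable {F L L' : Type*} [Field F] [LieRing L] [LieAlgebra F L] [LieRing L'] [LieAlgebra F L']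

lemma map_ad_pow_apply (f : L →ₗ⁅F⁆ L') (x y : L) (n : ℕ) :
    f ((ad F L x ^ n) y) = (ad F L' (f x) ^ n) (f y) := by
  induction n with
  | zero => simp
  | succ n ih => simp only [pow_succ', Module.End.mul_apply, ad_apply, map_lie, ih]

end LieHom

namespace LieSubalgebra

variable {F L : Type*} [Field F] [LieRing L] [LieAlgebra F L]

instance wellFoundedLT_of_isArtinian [IsArtinian F L] : WellFoundedLT (LieSubalgebra F L) :=
  RelHomClass.isWellFounded (⟨toSubmodule, @fun _ _ h ↦ h⟩ : _ →r (· < ·))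

section Map

variable {L' : Type*} [LieRing L'] [LieAlgebra F L'] (f : L →ₗ⁅F⁆ L')

lemma isNilpotent_map (K : LieSubalgebra F L) [LieRing.IsNilpotent K] :
    LieRing.IsNilpotent (K.map f) := by
  have hrange : (f.comp K.incl).range = K.map f := by
    ext y
    simp [LieHom.mem_range]
  rw [← hrange]
  exact (f.comp K.incl).isNilpotent_range

lemma map_le_map_iff {K K' : LieSubalgebra F L} :
    K.map f ≤ K'.map f ↔ K.toSubmodule ≤ K'.toSubmodule ⊔ (f.ker : Submodule F L) := by
  rw [LieIdeal.toLieSubalgebra_toSubmodule, LieHom.ker_toSubmodule, ← LinearMap.map_le_map_iff]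
  rfl

lemma exists_ad_pow_mem_ker_of_isNilpotent_map (K : LieSubalgebra F L)
    [LieRing.IsNilpotent (K.map f)] :
    ∃ k : ℕ, ∀ x ∈ K, ∀ y ∈ K, (ad F L x ^ k) y ∈ f.ker := by
  obtain ⟨k, hk⟩ := LieModule.exists_forall_pow_toEnd_eq_zero F (K.map f) (K.map f)
  refine ⟨k, fun x hx y hy ↦ ?_⟩
  have hfx : f x ∈ K.map f := (mem_map _ _ _).mpr ⟨x, hx, rfl⟩
  have hfy : f y ∈ K.map f := (mem_map _ _ _).mpr ⟨y, hy, rfl⟩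
  have h := congrArg Subtype.val (LinearMap.congr_fun (hk ⟨f x, hfx⟩) ⟨f y, hfy⟩)
  change ((ad F (K.map f) ⟨f x, hfx⟩ ^ k) ⟨f y, hfy⟩ : L') = 0 at h
  rwa [coe_ad_pow, ← f.map_ad_pow_apply, ← LieHom.mem_ker] at h

end Map

section Engel

variable [IsArtinian F L] {A : Submodule F L} {B : LieSubalgebra F L}

lemma toSubmodule_le_engel_inf_sup {x : L} (hx : x ∈ B) {k : ℕ}
    (hk : ∀ y ∈ B, (ad F L x ^ k) y ∈ A) :
    B.toSubmodule ≤ (engel F x ⊓ B).toSubmodule ⊔ A := by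
  set d := ad F B ⟨x, hx⟩
  obtain ⟨n, hn⟩ := Filter.eventually_atTop.mp d.eventually_codisjoint_ker_pow_range_pow
  intro y hy
  have hy' : (⟨y, hy⟩ : B) ∈ LinearMap.ker (d ^ (k + n)) ⊔ LinearMap.range (d ^ (k + n)) :=
    (hn (k + n) (by omega)).eq_top ▸ Submodule.mem_top
  obtain ⟨z, hz, w, ⟨v, rfl⟩, hzw⟩ := Submodule.mem_sup.mp hy'
  obtain rfl := congrArg Subtype.val hzw
  refine Submodule.add_mem_sup ⟨(mem_engel_iff F x z).mpr ⟨k + n, ?_⟩, z.2⟩ ?_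
  · simpa [d, coe_ad_pow] using congrArg Subtype.val hz
  · rw [pow_add, Module.End.mul_apply, coe_ad_pow]
    exact hk _ ((d ^ n) v).2

lemma isNilpotent_of_minimal_sup_eq [IsNoetherian F L] {U : LieSubalgebra F L}
    (hU : ∀ x ∈ U, ∃ k : ℕ, ∀ y ∈ U, (ad F L x ^ k) y ∈ A)
    (hB : Minimal (fun B' : LieSubalgebra F L ↦ B'.toSubmodule ⊔ A = U.toSubmodule) B) :
    LieRing.IsNilpotent B := by
  have hBU : B.toSubmodule ≤ U.toSubmodule := hB.1 ▸ le_sup_left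
  refine isNilpotent_of_forall_le_engel B fun x hx ↦ ?_
  obtain ⟨k, hk⟩ := hU x (hBU hx)
  have hE : (engel F x ⊓ B).toSubmodule ⊔ A = U.toSubmodule := by
    apply le_antisymm
    · exact hB.1 ▸ sup_le_sup_right ((toSubmodule_le_toSubmodule _ _).mpr inf_le_right) _
    calc U.toSubmodule = B.toSubmodule ⊔ A := hB.1.symm
      _ ≤ (engel F x ⊓ B).toSubmodule ⊔ A :=
        sup_le (toSubmodule_le_engel_inf_sup hx fun y hy ↦ hk y (hBU hy)) le_sup_right
  exact hB.eq_of_le hE inf_le_right ▸ inf_le_left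

end Engel

end LieSubalgebra

section QuotMk

variable {F L : Type*} [Field F] [LieRing L] [LieAlgebra F L]

lemma ker_quotMk (A : LieIdeal F L) : (quotMk F A).ker = A := by
  ext x
  exact LieSubmodule.Quotient.mk_eq_zero A

lemma map_quotMk_le_map_quotMk_iff {A : LieIdeal F L} {K K' : LieSubalgebra F L} :
    K.map (quotMk F A) ≤ K'.map (quotMk F A) ↔
      K.toSubmodule ≤ K'.toSubmodule ⊔ (A : Submodule F L) := by
  rw [LieSubalgebra.map_le_map_iff, ker_quotMk]

lemma exists_isMaximalNilpotentSubalgebra_ge [IsNoetherian F L] (B : LieSubalgebra F L)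
    [LieRing.IsNilpotent B] : ∃ C ≥ B, IsMaximalNilpotentSubalgebra F C := by
  obtain ⟨C, hBC, hC⟩ := exists_maximal_ge_of_wellFoundedGT (fun D : LieSubalgebra F L ↦
    LieRing.IsNilpotent D) B inferInstance
  exact ⟨C, hBC, hC.1, fun D hD hCD ↦ hC.eq_of_le hD hCD⟩

end QuotMk

/-- If `A` is an ideal of `L` and `U/A` is a maximal nilpotent
subalgebra of `L/A`, then `U = C + A` where `C` is a maximal nilpotent subalgebra of `L`. -/
theorem exists_maximalNilpotent_sup_of_quotient_maximalNilpotent {F L : Type*} [Field F]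
    [LieRing L] [LieAlgebra F L] [FiniteDimensional F L]
    (A : LieIdeal F L) (U : LieSubalgebra F L) (hAU : ∀ x ∈ A, x ∈ U)
    (hU : IsMaximalNilpotentSubalgebra F (U.map (quotMk F A))) :
    ∃ C : LieSubalgebra F L, IsMaximalNilpotentSubalgebra F C ∧
      U.toSubmodule = C.toSubmodule ⊔ (A : Submodule F L) := by
  have hAU : (A : Submodule F L) ≤ U.toSubmodule := hAU
  have := hU.1
  obtain ⟨k, hk⟩ := U.exists_ad_pow_mem_ker_of_isNilpotent_map (quotMk F A)
  rw [ker_quotMk] at hk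
  obtain ⟨B, -, hB⟩ := exists_minimal_le_of_wellFoundedLT
    (fun B : LieSubalgebra F L ↦ B.toSubmodule ⊔ A = U.toSubmodule) U (sup_eq_left.mpr hAU)
  have := LieSubalgebra.isNilpotent_of_minimal_sup_eq (fun x hx ↦ ⟨k, hk x hx⟩) hB
  obtain ⟨C, hBC, hC⟩ := exists_isMaximalNilpotentSubalgebra_ge B
  have := hC.1
  have hUC : U.map (quotMk F A) = C.map (quotMk F A) := by
    refine hU.2 _ (C.isNilpotent_map _) (map_quotMk_le_map_quotMk_iff.mpr ?_)
    exact hB.1 ▸ sup_le_sup_right ((LieSubalgebra.toSubmodule_le_toSubmodule _ _).mpr hBC) _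
  refine ⟨C, hC, le_antisymm (map_quotMk_le_map_quotMk_iff.mp hUC.le) (sup_le ?_ hAU)⟩
  exact (map_quotMk_le_map_quotMk_iff.mp hUC.ge).trans (sup_le le_rfl hAU)
end

section
/- Let L be a finite-dimensional Lie algebra over any field F in which every maximal subalgebra of each maximal nilpotent subalgebra of L is a c-ideal of L, and suppose that A is a minimal abelian ideal of L and M is a core-free maximal subalgebra of L (that is, the largest ideal of L contained in M is zero). Then A is one-dimensional. -/
/-!
As `M` is core-free and maximal, `L = A ⊕ M`, and `A` is its own centralizer. Let `C ⊇ A` be a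
maximal nilpotent subalgebra. Since `A` is abelian, `C² ⊆ ⁅C, A⁆ + M`, and nilpotency of `C` gives
`⁅C, A⁆ < A`, so some `a ∈ A` lies outside `⁅C, A⁆ + M`. A hyperplane `B` of `C` containing `C²`
but not `a` is a maximal subalgebra of `C`, hence a c-ideal. Minimality of `A` and `C_L(A) = A`
then force `A ∩ B = 0`, so `dim A ≤ dim C - dim B = 1`.
-/

theorem LieSubmodule.eq_bot_of_le_lie_top {R L M : Type*} [CommRing R] [LieRing L]
    [LieAlgebra R L] [AddCommGroup M] [Module R M] [LieRingModule L M] [LieModule R L M]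
    [LieModule.IsNilpotent L M]
    {N : LieSubmodule R L M} (h : N ≤ ⁅(⊤ : LieIdeal R L), N⁆) : N = ⊥ := by
  obtain ⟨k, hk⟩ := LieModule.IsNilpotent.nilpotent R L M
  have hle : ∀ n, N ≤ LieModule.lowerCentralSeries R L M n := by
    intro n
    induction n with
    | zero => exact le_top
    | succ n ih =>
      rw [LieModule.lowerCentralSeries_succ]
      exact h.trans (LieSubmodule.mono_lie_right _ ih)
  exact le_bot_iff.mp (hk ▸ hle k)

section

variable {R L : Type*} [CommRing R] [LieRing L] [LieAlgebra R L]

def LieIdeal.supSubalgebra (A : LieIdeal R L) (M : LieSubalgebra R L) : LieSubalgebra R L where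
  toSubmodule := A.toSubmodule ⊔ M.toSubmodule
  lie_mem' {x y} hx hy := by
    obtain ⟨a, ha, m, hm, rfl⟩ := Submodule.mem_sup.mp hx
    obtain ⟨a', ha', m', hm', rfl⟩ := Submodule.mem_sup.mp hy
    rw [add_lie, lie_add m]
    refine Submodule.add_mem _ (Submodule.mem_sup_left (lie_mem_left R L A _ _ ha)) ?_
    exact Submodule.add_mem _ (Submodule.mem_sup_left (lie_mem_right R L A _ _ ha'))
      (Submodule.mem_sup_right (M.lie_mem hm hm'))

def LieSubalgebra.infKer (C : LieSubalgebra R L) (g : Module.Dual R L)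
    (hg : ∀ x ∈ C, ∀ y ∈ C, g ⁅x, y⁆ = 0) : LieSubalgebra R L where
  toSubmodule := C.toSubmodule ⊓ LinearMap.ker g
  lie_mem' {x y} hx hy := ⟨C.lie_mem hx.1 hy.1, hg x hx.1 y hy.1⟩

theorem LieIdeal.lie_eq_zero_of_isLieAbelian {A : LieIdeal R L} [IsLieAbelian A] {x y : L}
    (hx : x ∈ A) (hy : y ∈ A) : ⁅x, y⁆ = 0 := by
  have := LieSubmodule.lie_mem_lie hx hy
  rwa [(LieSubmodule.lie_abelian_iff_lie_self_eq_bot A).mp inferInstance,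
    LieSubmodule.mem_bot] at this

/-- `⁅C, A ∩ C⁆`, formed inside `C` and viewed in `L`. -/
def LieSubalgebra.bracketComap (C : LieSubalgebra R L) (A : LieIdeal R L) : Submodule R L :=
  ((⁅(⊤ : LieIdeal R C), A.comap C.incl⁆ : LieIdeal R C) : Submodule R C).map C.toSubmodule.subtype

def LieSubalgebra.IsCoreFree (M : LieSubalgebra R L) : Prop :=
  ∀ I : LieIdeal R L, (∀ x ∈ I, x ∈ M) → I = ⊥

variable {A : LieIdeal R L} {C M : LieSubalgebra R L}

theorem LieSubalgebra.IsCoreFree.inf_eq_bot (hM : M.IsCoreFree)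
    (hsup : A.toSubmodule ⊔ M.toSubmodule = ⊤) {J : LieIdeal R L}
    (hJ : J ≤ LieModule.ker R L A) : J.toSubmodule ⊓ M.toSubmodule = ⊥ := by
  let I : LieIdeal R L :=
    { toSubmodule := J.toSubmodule ⊓ M.toSubmodule
      lie_mem := by
        intro z y hy
        obtain ⟨a, ha, m, hm, rfl⟩ := Submodule.mem_sup.mp (hsup ▸ Submodule.mem_top (x := z))
        refine ⟨lie_mem_right R L J _ _ hy.1, ?_⟩
        have hya : ⁅y, a⁆ = 0 :=
          congrArg Subtype.val ((LieModule.mem_ker R L A y).mp (hJ hy.1) ⟨a, ha⟩)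
        rw [add_lie, ← lie_skew, hya, neg_zero, zero_add]
        exact M.lie_mem hm hy.2 }
  exact congrArg LieSubmodule.toSubmodule (hM I fun _ hx => hx.2)

theorem LieSubalgebra.IsCoreFree.ker_le [IsLieAbelian A] (hM : M.IsCoreFree)
    (hsup : A.toSubmodule ⊔ M.toSubmodule = ⊤) : LieModule.ker R L A ≤ A := by
  have hAker : A ≤ LieModule.ker R L A := (LieIdeal.isLieAbelian_iff R L).mp ‹_›
  intro x hx
  obtain ⟨a, ha, m, hm, rfl⟩ := Submodule.mem_sup.mp (hsup ▸ Submodule.mem_top (x := x))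
  have hmker : m ∈ LieModule.ker R L A := by
    simpa using (LieModule.ker R L A).sub_mem hx (hAker ha)
  have hm0 : m = 0 := by
    simpa using (hM.inf_eq_bot hsup le_rfl).le ⟨hmker, hm⟩
  simpa [hm0] using ha

theorem LieSubalgebra.lie_mem_bracketComap {x a : L} (hx : x ∈ C) (ha : a ∈ A) (haC : a ∈ C) :
    ⁅x, a⁆ ∈ C.bracketComap A :=
  Submodule.mem_map.mpr
    ⟨⁅⟨x, hx⟩, ⟨a, haC⟩⁆, LieSubmodule.lie_mem_lie (LieSubmodule.mem_top _) ha, rfl⟩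

theorem LieSubalgebra.exists_mem_notMem_bracketComap_sup [LieRing.IsNilpotent C]
    (hA : A ≠ ⊥) (hAC : A.toSubmodule ≤ C.toSubmodule) {P : Submodule R L}
    (hAP : A.toSubmodule ⊓ P = ⊥) : ∃ a ∈ A, a ∉ C.bracketComap A ⊔ P := by
  set I : LieIdeal R C := A.comap C.incl
  have hI : I ≠ ⊥ := by
    refine fun hI => hA ((LieSubmodule.eq_bot_iff A).mpr fun a ha => ?_)
    have : (⟨a, hAC ha⟩ : C) ∈ I := ha
    rw [hI, LieSubmodule.mem_bot] at this
    exact congrArg Subtype.val this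
  obtain ⟨x, hxI, hx⟩ := SetLike.not_le_iff_exists.mp
    (mt LieSubmodule.eq_bot_of_le_lie_top hI)
  refine ⟨x, hxI, fun hxP => hx ?_⟩
  obtain ⟨_, hy', p, hp, hxyp⟩ := Submodule.mem_sup.mp hxP
  obtain ⟨y, hy, rfl⟩ := Submodule.mem_map.mp hy'
  have hpA : p ∈ A := by
    have : (x : L) - y ∈ A := A.sub_mem hxI (LieSubmodule.lie_le_right I ⊤ hy)
    rwa [← hxyp, Submodule.subtype_apply, add_sub_cancel_left] at this
  have hp0 : p ∈ A.toSubmodule ⊓ P := ⟨hpA, hp⟩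
  rw [hAP, Submodule.mem_bot] at hp0
  rw [hp0, add_zero] at hxyp
  rwa [← Subtype.ext hxyp]

theorem LieSubalgebra.lie_mem_bracketComap_sup [IsLieAbelian A]
    (hAC : A.toSubmodule ≤ C.toSubmodule) (hsup : A.toSubmodule ⊔ M.toSubmodule = ⊤)
    {x y : L} (hx : x ∈ C) (hy : y ∈ C) :
    ⁅x, y⁆ ∈ C.bracketComap A ⊔ M.toSubmodule := by
  obtain ⟨a, ha, m, hm, rfl⟩ := Submodule.mem_sup.mp (hsup ▸ Submodule.mem_top (x := x))
  obtain ⟨a', ha', m', hm', rfl⟩ := Submodule.mem_sup.mp (hsup ▸ Submodule.mem_top (x := y))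
  have hmC : m ∈ C := by simpa using C.sub_mem hx (hAC ha)
  have hm'C : m' ∈ C := by simpa using C.sub_mem hy (hAC ha')
  have hexp : ⁅a + m, a' + m'⁆ = -⁅m', a⁆ + ⁅m, a'⁆ + ⁅m, m'⁆ := by
    rw [add_lie, lie_add, lie_add, A.lie_eq_zero_of_isLieAbelian ha ha', ← lie_skew m' a]
    abel
  rw [hexp]
  refine add_mem (Submodule.mem_sup_left (add_mem (neg_mem ?_) ?_))
    (Submodule.mem_sup_right (M.lie_mem hm hm'))
  · exact C.lie_mem_bracketComap hm'C ha (hAC ha)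
  · exact C.lie_mem_bracketComap hmC ha' (hAC ha')

end

section

variable {F L : Type*} [Field F] [LieRing L] [LieAlgebra F L]

theorem IsMaximalSubalgebra.sup_eq_top {M : LieSubalgebra F L} (hM : IsMaximalSubalgebra F M)
    {A : LieIdeal F L} (hAM : ¬ A.toSubmodule ≤ M.toSubmodule) :
    A.toSubmodule ⊔ M.toSubmodule = ⊤ := by
  have hlt : M < A.supSubalgebra M := SetLike.lt_iff_le_and_exists.mpr
    ⟨fun x hx => Submodule.mem_sup_right hx, by
      obtain ⟨a, ha, haM⟩ := SetLike.not_le_iff_exists.mp hAM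
      exact ⟨a, Submodule.mem_sup_left ha, haM⟩⟩
  have := congrArg LieSubalgebra.toSubmodule (hM.2 _ hlt)
  rwa [LieSubalgebra.top_toSubmodule] at this

theorem LieSubalgebra.exists_isMaximalNilpotentSubalgebra_le [FiniteDimensional F L]
    {S : LieSubalgebra F L} (hS : LieRing.IsNilpotent S) :
    ∃ C, IsMaximalNilpotentSubalgebra F C ∧ S ≤ C := by
  obtain ⟨C, ⟨hC, hSC⟩, hmax⟩ := wellFounded_gt.has_min
    {C : LieSubalgebra F L | LieRing.IsNilpotent C ∧ S ≤ C} ⟨S, hS, le_rfl⟩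
  exact ⟨C, ⟨hC, fun D hD hCD => eq_of_le_of_not_lt hCD (hmax D ⟨hD, hSC.trans hCD⟩)⟩, hSC⟩

theorem LieSubalgebra.exists_dual_lie_eq_zero_and_apply_ne_zero {C : LieSubalgebra F L}
    [LieRing.IsNilpotent C] {A : LieIdeal F L} [IsLieAbelian A] (hA : A ≠ ⊥)
    (hAC : A.toSubmodule ≤ C.toSubmodule) {M : LieSubalgebra F L}
    (hsup : A.toSubmodule ⊔ M.toSubmodule = ⊤) (hinf : A.toSubmodule ⊓ M.toSubmodule = ⊥) :
    ∃ g : Module.Dual F L, (∀ x ∈ C, ∀ y ∈ C, g ⁅x, y⁆ = 0) ∧ ∃ a ∈ A, g a ≠ 0 := by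
  obtain ⟨a, haA, haP⟩ := C.exists_mem_notMem_bracketComap_sup hA hAC hinf
  obtain ⟨g, hga, hgP⟩ := Submodule.exists_dual_map_eq_bot_of_notMem haP inferInstance
  exact ⟨g, fun x hx y hy => LinearMap.le_ker_iff_map.mpr hgP
    (C.lie_mem_bracketComap_sup hAC hsup hx hy), a, haA, hga⟩

theorem LieSubalgebra.isMaximalSubalgebraOf_infKer {C : LieSubalgebra F L} {g : Module.Dual F L}
    (hg : ∀ x ∈ C, ∀ y ∈ C, g ⁅x, y⁆ = 0) {a : L} (haC : a ∈ C) (ha : g a ≠ 0) :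
    IsMaximalSubalgebraOf F (C.infKer g hg) C := by
  refine ⟨SetLike.lt_iff_le_and_exists.mpr ⟨fun x hx => hx.1, a, haC, fun h => ha h.2⟩, ?_⟩
  intro K hlt hKC
  obtain ⟨x, hxK, hx⟩ := SetLike.exists_of_lt hlt
  have hgx : g x ≠ 0 := fun h => hx ⟨hKC hxK, h⟩
  refine le_antisymm hKC fun c hc => ?_
  have hcx : c - (g c / g x) • x ∈ C.infKer g hg :=
    ⟨C.sub_mem hc (C.smul_mem _ (hKC hxK)), by simp [div_mul_cancel₀ _ hgx]⟩
  simpa using K.add_mem (hlt.le hcx) (K.smul_mem (g c / g x) hxK)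

theorem IsCIdeal.inf_eq_bot {B : LieSubalgebra F L} (hB : IsCIdeal F B) {A : LieIdeal F L}
    (hAmin : ∀ I : LieIdeal F L, I ≤ A → I = ⊥ ∨ I = A) (hker : LieModule.ker F L A ≤ A)
    (hAB : ¬ A.toSubmodule ≤ B.toSubmodule) : A.toSubmodule ⊓ B.toSubmodule = ⊥ := by
  obtain ⟨C, hBC, D, hDB, hBCD⟩ := hB
  rcases hAmin (A ⊓ C) inf_le_left with hAC | hAC
  · have hCker : C ≤ LieModule.ker F L A := fun y hy => (LieModule.mem_ker F L A y).mpr fun m =>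
      Subtype.ext <| (LieSubmodule.mem_bot _).mp <| hAC ▸
        (LieSubmodule.mem_inf _ _ _).mpr ⟨lie_mem_right F L A _ _ m.2, lie_mem_left F L C _ _ hy⟩
    have hC : C = ⊥ := le_bot_iff.mp (hAC ▸ le_inf (hCker.trans hker) le_rfl)
    have hBtop : B = ⊤ := by simpa [hC] using hBC
    exact absurd (hBtop ▸ le_top) hAB
  · rcases hAmin (A ⊓ D) inf_le_left with hAD | hAD
    · refine eq_bot_iff.mpr fun x hx => ?_
      have hxC : x ∈ C := (inf_eq_left.mp hAC) hx.1
      simpa [hAD] using (LieSubmodule.mem_inf _ _ _).mpr ⟨hx.1, hBCD x hx.2 hxC⟩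
    · exact absurd (fun x hx => hDB x (inf_eq_left.mp hAD hx)) hAB

theorem Submodule.finrank_eq_one_of_disjoint_ker {V : Type*} [AddCommGroup V] [Module F V]
    {W : Submodule F V} (hW : W ≠ ⊥) {g : Module.Dual F V} (hWg : Disjoint W (LinearMap.ker g)) :
    Module.finrank F W = 1 := by
  have hinj := LinearMap.injective_domRestrict_iff.mpr hWg
  have : FiniteDimensional F W := Module.Finite.of_injective _ hinj
  have hle : Module.finrank F W ≤ 1 := by
    simpa using LinearMap.finrank_le_finrank_of_injective hinj
  have hpos : Module.finrank F W ≠ 0 := mt Submodule.finrank_eq_zero.mp hW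
  omega

end

/-- Suppose every maximal subalgebra of each maximal nilpotent
subalgebra of `L` is a c-ideal of `L`, `A` is a minimal abelian ideal of `L`, and `M` is a
core-free maximal subalgebra of `L`. Then `A` is one-dimensional. -/
theorem finrank_eq_one_of_minimalAbelian {F L : Type*} [Field F] [LieRing L]
    [LieAlgebra F L] [FiniteDimensional F L]
    (h : ∀ C : LieSubalgebra F L, IsMaximalNilpotentSubalgebra F C →
      ∀ B : LieSubalgebra F L, IsMaximalSubalgebraOf F B C → IsCIdeal F B)
    (A : LieIdeal F L) (hA : IsMinimalAbelianIdeal F A)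
    (M : LieSubalgebra F L) (hM : IsMaximalSubalgebra F M)
    (hMcf : ∀ I : LieIdeal F L, (∀ x ∈ I, x ∈ M) → I = ⊥) :
    Module.finrank F A = 1 := by
  obtain ⟨hA0, hAab, hAmin⟩ := hA
  have hsup : A.toSubmodule ⊔ M.toSubmodule = ⊤ := hM.sup_eq_top fun hle => hA0 (hMcf A hle)
  have hAker : A ≤ LieModule.ker F L A := (LieIdeal.isLieAbelian_iff F L).mp hAab
  have hinf : A.toSubmodule ⊓ M.toSubmodule = ⊥ :=
    LieSubalgebra.IsCoreFree.inf_eq_bot hMcf hsup hAker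
  have hAnil : LieRing.IsNilpotent A.toLieSubalgebra := by
    have : IsLieAbelian A.toLieSubalgebra := hAab
    infer_instance
  obtain ⟨C, hCmax, hAC⟩ := LieSubalgebra.exists_isMaximalNilpotentSubalgebra_le hAnil
  have : LieRing.IsNilpotent C := hCmax.1
  obtain ⟨g, hg, a, haA, ha⟩ := C.exists_dual_lie_eq_zero_and_apply_ne_zero hA0 hAC hsup hinf
  have hB := h C hCmax _ (C.isMaximalSubalgebraOf_infKer hg (hAC haA) ha)
  have hAB := hB.inf_eq_bot hAmin (LieSubalgebra.IsCoreFree.ker_le hMcf hsup)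
    fun hle => ha (hle haA).2
  have hAg : Disjoint A.toSubmodule (LinearMap.ker g) :=
    disjoint_iff.mpr (eq_bot_iff.mpr fun x hx => hAB.le ⟨hx.1, hAC hx.1, hx.2⟩)
  exact Submodule.finrank_eq_one_of_disjoint_ker (by simpa using hA0) hAg
end

section
/- Let L be a finite-dimensional Lie algebra over any field F and let x be a nonzero element of L spanning a one-dimensional subalgebra Fx. Then Fx is a c-ideal of L if and only if Fx is an ideal of L or x ∉ L², where L² = [L,L] is the derived subalgebra of L. -/
/-!
If `L = Fx + C` with `C` an ideal, then `L/C` is spanned by the image of `x`, hence abelian, so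
`L² ≤ C`. Thus when `Fx` is a c-ideal, either `x ∈ C`, and then `x` lies in the ideal `D ≤ Fx`,
making `Fx = D` an ideal; or `x ∉ C ⊇ L²`. Conversely an ideal is a c-ideal (take `C = L`), and if
`x ∉ L²`, a linear form vanishing on `L²` but not at `x` has a kernel `C` which is an ideal (every
subspace containing `L²` is) complementary to `Fx`.
-/

open LieAlgebra

lemma disjoint_span_singleton_ker {F V : Type*} [Field F] [AddCommGroup V] [Module F V] {x : V}
    {f : Module.Dual F V} (hfx : f x ≠ 0) : Disjoint (F ∙ x) (LinearMap.ker f) := by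
  rw [Submodule.disjoint_def]
  rintro _ hz hfz
  obtain ⟨c, rfl⟩ := Submodule.mem_span_singleton.mp hz
  have hc : c = 0 := by simpa [hfx] using hfz
  simp [hc]

section DerivedSeries

variable {R L : Type*} [CommRing R] [LieRing L] [LieAlgebra R L]

lemma lie_mem_derivedSeries_one (y z : L) : ⁅y, z⁆ ∈ derivedSeries R L 1 :=
  LieSubmodule.lie_mem_lie (LieSubmodule.mem_top y) (LieSubmodule.mem_top z)

def LieIdeal.ofDerivedSeriesOneLE (p : Submodule R L)
    (hp : (derivedSeries R L 1 : Submodule R L) ≤ p) : LieIdeal R L :=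
  { p with lie_mem := fun {y m} _ => hp (lie_mem_derivedSeries_one y m) }

lemma derivedSeries_one_le_of_sup_eq_top {B : LieSubalgebra R L} {C : LieIdeal R L}
    (hB : ∀ a ∈ B, ∀ b ∈ B, ⁅a, b⁆ ∈ C) (hsup : B.toSubmodule ⊔ (C : Submodule R L) = ⊤) :
    derivedSeries R L 1 ≤ C := by
  have hdecomp (a : L) : ∃ b ∈ B, ∃ c ∈ C, b + c = a :=
    Submodule.mem_sup.mp (hsup ▸ Submodule.mem_top)
  intro z hz
  have hz' : z ∈ (derivedSeries R L 1 : Submodule R L) := hz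
  rw [coe_derivedSeries_one_eq] at hz'
  refine Submodule.span_le.mpr ?_ hz'
  rintro _ ⟨a, a', rfl⟩
  obtain ⟨b, hb, c, hc, rfl⟩ := hdecomp a
  obtain ⟨b', hb', c', hc', rfl⟩ := hdecomp a'
  rw [add_lie, lie_add, lie_add]
  exact C.add_mem (C.add_mem (hB b hb b' hb') (C.lie_mem hc'))
    (C.add_mem (lie_mem_left R L C _ _ hc) (C.lie_mem hc'))

end DerivedSeries

section CIdeal

variable {F L : Type*} [Field F] [LieRing L] [LieAlgebra F L]

lemma isCIdeal_of_lie_mem {B : LieSubalgebra F L} (hB : ∀ y : L, ∀ b ∈ B, ⁅y, b⁆ ∈ B) :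
    IsCIdeal F B := by
  obtain ⟨I, rfl⟩ := (LieSubalgebra.exists_lieIdeal_coe_eq_iff (K := B)).mpr hB
  exact ⟨⊤, by simp, I, fun _ hz => hz, fun _ hz _ => hz⟩

lemma isCIdeal_of_sup_eq_top_of_disjoint {B : LieSubalgebra F L} (C : LieIdeal F L)
    (hsup : B.toSubmodule ⊔ (C : Submodule F L) = ⊤)
    (hdisj : Disjoint B.toSubmodule (C : Submodule F L)) : IsCIdeal F B :=
  ⟨C, hsup, ⊥, fun _ hz => (LieSubmodule.mem_bot _).mp hz ▸ B.zero_mem,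
    fun _ hzB hzC => (LieSubmodule.mem_bot _).mpr (Submodule.disjoint_def.mp hdisj _ hzB hzC)⟩

end CIdeal

section LineSpan

variable {F L : Type*} [Field F] [LieRing L] [LieAlgebra F L]

lemma lie_eq_zero_of_mem_lineSpan {x a b : L} (ha : a ∈ lineSpan F x) (hb : b ∈ lineSpan F x) :
    ⁅a, b⁆ = 0 := by
  obtain ⟨s, rfl⟩ := Submodule.mem_span_singleton.mp ha
  obtain ⟨t, rfl⟩ := Submodule.mem_span_singleton.mp hb
  simp

lemma mem_of_mem_lineSpan {x b : L} {D : LieIdeal F L} (hx : x ∈ D) (hb : b ∈ lineSpan F x) :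
    b ∈ D :=
  (Submodule.span_singleton_le_iff_mem x D.toSubmodule).mpr hx hb

lemma isCIdeal_lineSpan_of_notMem_derivedSeries {x : L} (hx : x ∉ derivedSeries F L 1) :
    IsCIdeal F (lineSpan F x) := by
  obtain ⟨f, hfx, hf⟩ := Submodule.exists_dual_map_eq_bot_of_notMem hx inferInstance
  let C := LieIdeal.ofDerivedSeriesOneLE (LinearMap.ker f) (LinearMap.le_ker_iff_map.mpr hf)
  exact isCIdeal_of_sup_eq_top_of_disjoint C (f.span_singleton_sup_ker_eq_top hfx)
    (disjoint_span_singleton_ker hfx)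

end LineSpan

theorem lineSpan_isCIdeal_iff_general {F L : Type*} [Field F] [LieRing L] [LieAlgebra F L]
    (x : L) :
    IsCIdeal F (lineSpan F x) ↔
      ((∀ y : L, ∀ b ∈ lineSpan F x, ⁅y, b⁆ ∈ lineSpan F x) ∨
        x ∉ LieAlgebra.derivedSeries F L 1) := by
  constructor
  · rintro ⟨C, hsup, D, hDB, hBCD⟩
    by_cases hxC : x ∈ C
    · have hxD : x ∈ D := hBCD x (Submodule.mem_span_singleton_self x) hxC
      exact Or.inl fun y b hb => hDB _ (D.lie_mem (mem_of_mem_lineSpan hxD hb))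
    · have hL2C := derivedSeries_one_le_of_sup_eq_top
        (fun a ha b hb => (lie_eq_zero_of_mem_lineSpan ha hb ▸ C.zero_mem)) hsup
      exact Or.inr fun hx2 => hxC (hL2C hx2)
  · rintro (hideal | hx2)
    · exact isCIdeal_of_lie_mem hideal
    · exact isCIdeal_lineSpan_of_notMem_derivedSeries hx2

/-- For `0 ≠ x ∈ L`, the one-dimensional subalgebra `Fx` is a c-ideal
of `L` if and only if `Fx` is an ideal of `L` or `x ∉ L² = [L,L]`. -/
theorem lineSpan_isCIdeal_iff {F L : Type*} [Field F] [LieRing L] [LieAlgebra F L]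
    [FiniteDimensional F L] (x : L) (hx : x ≠ 0) :
    IsCIdeal F (lineSpan F x) ↔
      ((∀ y : L, ∀ b ∈ lineSpan F x, ⁅y, b⁆ ∈ lineSpan F x) ∨
        x ∉ LieAlgebra.derivedSeries F L 1) :=
  lineSpan_isCIdeal_iff_general x
end

section
/- Let L be a finite-dimensional Lie algebra over any field F. Then every one-dimensional subalgebra of L is a c-ideal of L if and only if either L³ = 0 (where L¹ = L, L^{k+1} = [L, L^k]), or L = A ⊕ B where A is an abelian ideal of L and B is an almost abelian ideal of L. -/
/-! Both sides are equivalent to: every element of `L²` spans an ideal of `L`.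

Given that, a one-dimensional subalgebra `B` either lies in `L²`, and is then an ideal, or meets
`L²` trivially, and then `C = L² ⊕ U` with `U` a complement of `B + L²` works, `C` being an ideal
because it contains `L²`. Conversely, if `B = Fu` with `u ∈ L²` is a c-ideal with ideal `C`, then
`L/C` is spanned by the image of `u`, so it is abelian and `u ∈ L² ≤ C`; hence `B = B ∩ C ≤ B_L`.

When every line of `L²` is an ideal, `ad y` acts on `L²` as a scalar `χ y`, with `χ` linear.
If `L³ ≠ 0`, the Jacobi identity gives `χ (L²) = 0`, and for `χ x = 1` the element `x` acts as the
identity on `L²`; then `L` is the direct sum of the central ideal `ker χ ∩ C_L(x)` and the almost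
abelian ideal `L² + Fx`. For the converse, in `A ⊕ B` we have `L² = B²`, and `B = B² ⊕ Fx` acts
on its abelian ideal `B²` by scalars. -/

open LieModule LieAlgebra

section CommRing

variable {R L : Type*} [CommRing R] [LieRing L] [LieAlgebra R L]

theorem lie_mem_lowerCentralSeries_one (y z : L) : ⁅y, z⁆ ∈ lowerCentralSeries R L L 1 := by
  rw [lowerCentralSeries_succ, lowerCentralSeries_zero]
  exact LieSubmodule.lie_mem_lie (LieSubmodule.mem_top y) (LieSubmodule.mem_top z)

theorem lowerCentralSeries_one_le_of_forall_lie_mem {S : Submodule R L}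
    (h : ∀ y z : L, ⁅y, z⁆ ∈ S) : (lowerCentralSeries R L L 1 : Submodule R L) ≤ S := by
  rw [lowerCentralSeries_succ, lowerCentralSeries_zero, LieIdeal.toLieSubalgebra_toSubmodule,
    LieSubmodule.lieIdeal_oper_eq_linear_span, Submodule.span_le]
  rintro _ ⟨y, z, rfl⟩
  exact h y z

theorem derivedSeries_one_eq_lowerCentralSeries_one :
    derivedSeries R L 1 = lowerCentralSeries R L L 1 := by
  rw [derivedSeries_def, derivedSeriesOfIdeal_succ, derivedSeriesOfIdeal_zero,
    lowerCentralSeries_succ, lowerCentralSeries_zero]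

theorem lowerCentralSeries_two_eq_bot_iff :
    lowerCentralSeries R L L 2 = ⊥ ↔ ∀ y : L, ∀ u ∈ lowerCentralSeries R L L 1, ⁅y, u⁆ = 0 := by
  rw [lowerCentralSeries_succ, LieSubmodule.lie_eq_bot_iff]
  simp only [LieSubmodule.mem_top, true_imp_iff]

namespace LieIdeal

theorem mem_derivedSeries_one_iff {I : LieIdeal R L} {w : I} :
    w ∈ derivedSeries R I 1 ↔ (w : L) ∈ ⁅I, I⁆ := by
  rw [derivedSeries_eq_derivedSeriesOfIdeal_comap, derivedSeriesOfIdeal_succ,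
    derivedSeriesOfIdeal_zero]
  rfl

theorem lie_eq_zero_of_disjoint {I J : LieIdeal R L} (hIJ : Disjoint I J) {x y : L} (hx : x ∈ I)
    (hy : y ∈ J) : ⁅x, y⁆ = 0 :=
  (LieSubmodule.mem_bot _).mp
    (hIJ.eq_bot ▸ LieSubmodule.lie_le_inf I J (LieSubmodule.lie_mem_lie hx hy))

theorem lowerCentralSeries_one_eq_lie_self_of_isCompl {A B : LieIdeal R L} [IsLieAbelian A]
    (hAB : IsCompl A B) : lowerCentralSeries R L L 1 = ⁅B, B⁆ := by
  have hAA : ⁅A, A⁆ = ⊥ := (LieSubmodule.lie_abelian_iff_lie_self_eq_bot A).mp inferInstance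
  have hAB' : ⁅A, B⁆ = ⊥ := eq_bot_iff.mpr (hAB.inf_eq_bot ▸ LieSubmodule.lie_le_inf A B)
  rw [lowerCentralSeries_succ, lowerCentralSeries_zero, ← hAB.sup_eq_top, LieSubmodule.sup_lie,
    LieSubmodule.lie_sup, LieSubmodule.lie_sup, LieSubmodule.lie_comm B A, hAA, hAB']
  simp

theorem coe_mem_lowerCentralSeries_one {I : LieIdeal R L} {w : I}
    (hw : w ∈ lowerCentralSeries R I I 1) : (w : L) ∈ lowerCentralSeries R L L 1 := by
  rw [← derivedSeries_one_eq_lowerCentralSeries_one, mem_derivedSeries_one_iff] at hw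
  rw [lowerCentralSeries_succ, lowerCentralSeries_zero]
  exact LieSubmodule.mono_lie le_top le_top hw

def ofLowerCentralSeriesLE (S : Submodule R L)
    (hS : (lowerCentralSeries R L L 1 : Submodule R L) ≤ S) : LieIdeal R L :=
  { S with lie_mem := fun _ => hS (lie_mem_lowerCentralSeries_one _ _) }

def ofLECenter (S : Submodule R L) (hS : S ≤ (center R L : Submodule R L)) : LieIdeal R L :=
  { S with
    lie_mem := fun {y a} ha => by
      rw [(mem_maxTrivSubmodule R L L a).mp (hS ha) y]
      exact S.zero_mem }

instance (S : Submodule R L) (hS : S ≤ (center R L : Submodule R L)) :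
    IsLieAbelian (ofLECenter S hS) :=
  ⟨fun a b => Subtype.ext ((mem_maxTrivSubmodule R L L b).mp (hS b.2) a)⟩

end LieIdeal

end CommRing

section Field

variable {F L : Type*} [Field F] [LieRing L] [LieAlgebra F L]

theorem LinearMap.exists_eq_smul_id_of_forall_mem_span {V : Type*} [AddCommGroup V] [Module F V]
    {f : V →ₗ[F] V} (h : ∀ v, f v ∈ F ∙ v) : ∃ a : F, f = a • 1 :=
  exists_eq_smul_id_of_forall_notLinearIndependent fun v hli => by
    obtain ⟨a, ha⟩ := Submodule.mem_span_singleton.mp (h v)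
    exact (LinearIndependent.pair_iff' (hli.ne_zero 0)).mp hli a ha

theorem LieSubmodule.exists_forall_lie_eq_smul {M : Type*} [AddCommGroup M] [Module F M]
    [LieRingModule L M] [LieModule F L M] (N : LieSubmodule F L M)
    (h : ∀ y : L, ∀ m ∈ N, ⁅y, m⁆ ∈ F ∙ m) :
    ∃ χ : L →ₗ[F] F, ∀ y : L, ∀ m ∈ N, ⁅y, m⁆ = χ y • m := by
  have hscalar (y : L) : ∃ a : F, ∀ m ∈ N, ⁅y, m⁆ = a • m := by
    obtain ⟨a, ha⟩ := LinearMap.exists_eq_smul_id_of_forall_mem_span (f := toEnd F L N y)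
      fun m => by
        obtain ⟨a, ha⟩ := Submodule.mem_span_singleton.mp (h y m m.2)
        exact Submodule.mem_span_singleton.mpr ⟨a, Subtype.ext ha⟩
    exact ⟨a, fun m hm => congrArg Subtype.val (LinearMap.congr_fun ha ⟨m, hm⟩)⟩
  choose c hc using hscalar
  by_cases hN : ∃ m₀ ∈ N, m₀ ≠ 0
  · obtain ⟨m₀, hm₀, hne⟩ := hN
    refine ⟨{ toFun := c, map_add' := fun y z => ?_, map_smul' := fun t y => ?_ }, hc⟩
    · apply smul_left_injective F hne
      simp only [← hc _ _ hm₀, add_lie, add_smul]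
    · apply smul_left_injective F hne
      simp only [← hc _ _ hm₀, smul_lie, RingHom.id_apply, smul_eq_mul, mul_smul]
  · push Not at hN
    exact ⟨0, fun y m hm => by simp [hN m hm]⟩

variable (F L) in
def DerivedLinesAreIdeals : Prop :=
  ∀ y : L, ∀ u ∈ lowerCentralSeries F L L 1, ⁅y, u⁆ ∈ F ∙ u

theorem DerivedLinesAreIdeals.lie_mem_of_le (hL : DerivedLinesAreIdeals F L) {S : Submodule F L}
    (hS : S ≤ lowerCentralSeries F L L 1) (y : L) {s : L} (hs : s ∈ S) : ⁅y, s⁆ ∈ S :=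
  (Submodule.span_singleton_le_iff_mem s S).mpr hs (hL y s (hS hs))

theorem isCIdeal_of_forall_lie_mem {B : LieSubalgebra F L} (hB : ∀ y b : L, b ∈ B → ⁅y, b⁆ ∈ B) :
    IsCIdeal F B := by
  obtain ⟨I, rfl⟩ := (LieSubalgebra.exists_lieIdeal_coe_eq_iff F B).mpr hB
  exact ⟨⊤, by simp, I, fun _ hx => hx, fun _ hx _ => hx⟩

theorem isCIdeal_of_disjoint_lowerCentralSeries {B : LieSubalgebra F L}
    (hB : Disjoint B.toSubmodule (lowerCentralSeries F L L 1 : Submodule F L)) : IsCIdeal F B := by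
  obtain ⟨U, hU⟩ := Submodule.exists_isCompl (B.toSubmodule ⊔ lowerCentralSeries F L L 1)
  have hC := hB.isCompl_sup_right_of_isCompl_sup_left hU
  refine ⟨LieIdeal.ofLowerCentralSeriesLE _ le_sup_left, hC.sup_eq_top, ⊥,
    fun x hx => ?_, fun x hxB hxC => ?_⟩
  · rw [(LieSubmodule.mem_bot x).mp hx]
    exact B.zero_mem
  · exact (Submodule.disjoint_def.mp hC.disjoint x hxB hxC).symm ▸ LieSubmodule.zero_mem ⊥

theorem DerivedLinesAreIdeals.isCIdeal (hL : DerivedLinesAreIdeals F L) {B : LieSubalgebra F L}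
    (hB : Module.finrank F B = 1) : IsCIdeal F B := by
  by_cases hle : B.toSubmodule ≤ lowerCentralSeries F L L 1
  · exact isCIdeal_of_forall_lie_mem fun y b hb => hL.lie_mem_of_le hle y hb
  · exact isCIdeal_of_disjoint_lowerCentralSeries
      ((Submodule.isAtom_iff_finrank_eq_one.mpr hB).not_le_iff_disjoint.mp hle)

theorem IsCIdeal.lie_mem_of_le {B : LieSubalgebra F L} [IsLieAbelian B] (hB : IsCIdeal F B)
    (hle : B.toSubmodule ≤ lowerCentralSeries F L L 1) (y : L) {b : L} (hb : b ∈ B) :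
    ⁅y, b⁆ ∈ B := by
  obtain ⟨C, hBC, D, hDB, hBCD⟩ := hB
  have hmem (z : L) : z ∈ B.toSubmodule ⊔ (C : Submodule F L) := hBC ▸ Submodule.mem_top
  have hLC : (lowerCentralSeries F L L 1 : Submodule F L) ≤ C := by
    refine lowerCentralSeries_one_le_of_forall_lie_mem fun y z => ?_
    obtain ⟨b₁, hb₁, c₁, hc₁, rfl⟩ := Submodule.mem_sup.mp (hmem y)
    obtain ⟨b₂, hb₂, c₂, hc₂, rfl⟩ := Submodule.mem_sup.mp (hmem z)
    have hb₁₂ : ⁅b₁, b₂⁆ = 0 := congrArg Subtype.val (trivial_lie_zero B B ⟨b₁, hb₁⟩ ⟨b₂, hb₂⟩)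
    rw [lie_add, add_lie b₁ c₁ b₂, hb₁₂, zero_add]
    exact add_mem (lie_mem_left F L C _ _ hc₁) (C.lie_mem hc₂)
  exact hDB _ (D.lie_mem (hBCD b hb (hLC (hle hb))))

instance (u : L) : IsLieAbelian (lineSpan F u) := by
  refine ⟨fun ⟨a, ha⟩ ⟨b, hb⟩ => Subtype.ext ?_⟩
  obtain ⟨c, rfl⟩ := Submodule.mem_span_singleton.mp ha
  obtain ⟨d, rfl⟩ := Submodule.mem_span_singleton.mp hb
  simp

theorem derivedLinesAreIdeals_of_forall_isCIdeal
    (h : ∀ B : LieSubalgebra F L, Module.finrank F B = 1 → IsCIdeal F B) :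
    DerivedLinesAreIdeals F L := by
  intro y u hu
  rcases eq_or_ne u 0 with rfl | hu₀
  · simp
  have hB : Module.finrank F (lineSpan F u) = 1 := finrank_span_singleton hu₀
  exact (h _ hB).lie_mem_of_le
    ((Submodule.span_singleton_le_iff_mem _ _).mpr hu) y (Submodule.mem_span_singleton_self u)

theorem IsAlmostAbelian.derivedLinesAreIdeals (hL : IsAlmostAbelian F L) :
    DerivedLinesAreIdeals F L := by
  obtain ⟨x, hab, hx, hsup, -⟩ := hL
  intro y w hw
  rw [← derivedSeries_one_eq_lowerCentralSeries_one] at hw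
  obtain ⟨d, hd, _, hcx, rfl⟩ := Submodule.mem_sup.mp (hsup ▸ Submodule.mem_top (x := y))
  obtain ⟨c, rfl⟩ := Submodule.mem_span_singleton.mp hcx
  have hdw : ⁅d, w⁆ = 0 := congrArg Subtype.val (hab.trivial ⟨d, hd⟩ ⟨w, hw⟩)
  rw [add_lie, hdw, smul_lie, hx w hw, zero_add]
  exact Submodule.smul_mem _ c (Submodule.mem_span_singleton_self w)

theorem DerivedLinesAreIdeals.of_isCompl {A B : LieIdeal F L} [IsLieAbelian A] (hAB : IsCompl A B)
    (hB : DerivedLinesAreIdeals F B) : DerivedLinesAreIdeals F L := by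
  intro y u hu
  rw [LieIdeal.lowerCentralSeries_one_eq_lie_self_of_isCompl hAB] at hu
  have huB : u ∈ B := LieSubmodule.lie_le_right B B hu
  have hu' : (⟨u, huB⟩ : B) ∈ lowerCentralSeries F B B 1 := by
    rw [← derivedSeries_one_eq_lowerCentralSeries_one, LieIdeal.mem_derivedSeries_one_iff]
    exact hu
  obtain ⟨a, ha, b, hb, rfl⟩ :=
    (LieSubmodule.mem_sup A B y).mp (hAB.sup_eq_top ▸ LieSubmodule.mem_top y)
  obtain ⟨c, hc⟩ := Submodule.mem_span_singleton.mp (hB ⟨b, hb⟩ _ hu')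
  rw [add_lie, LieIdeal.lie_eq_zero_of_disjoint hAB.disjoint ha huB, zero_add]
  exact Submodule.mem_span_singleton.mpr ⟨c, congrArg Subtype.val hc⟩

theorem isAlmostAbelian_of_forall_lie_eq_smul {K : Type*} [LieRing K] [LieAlgebra F K] (x : K)
    (χ : K →ₗ[F] F) (hx : χ x = 1)
    (hχ : ∀ y : K, ∀ w ∈ lowerCentralSeries F K K 1, ⁅y, w⁆ = χ y • w)
    (hxχ : ∀ b : K, ⁅x, b⁆ = b - χ b • x) : IsAlmostAbelian F K := by
  have hx₀ : x ≠ 0 := by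
    rintro rfl
    simp at hx
  have hker (w : K) (hw : w ∈ lowerCentralSeries F K K 1) : χ w = 0 := by
    have h := hxχ w
    rw [hχ x w hw, hx, one_smul] at h
    exact (smul_eq_zero.mp (sub_eq_self.mp h.symm)).resolve_right hx₀
  rw [IsAlmostAbelian, derivedSeries_one_eq_lowerCentralSeries_one]
  refine ⟨x, ⟨fun d e => Subtype.ext ?_⟩, fun w hw => by rw [hχ x w hw, hx, one_smul], ?_, ?_⟩
  · change ⁅(d : K), (e : K)⁆ = 0
    rw [hχ _ _ e.2, hker _ d.2, zero_smul]
  · refine eq_top_iff.mpr fun b _ => Submodule.mem_sup.mpr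
      ⟨⁅x, b⁆, lie_mem_lowerCentralSeries_one x b, χ b • x,
        Submodule.smul_mem _ _ (Submodule.mem_span_singleton_self x), ?_⟩
    rw [hxχ b, sub_add_cancel]
  · refine eq_bot_iff.mpr fun w ⟨hw, hwx⟩ => ?_
    obtain ⟨c, rfl⟩ := Submodule.mem_span_singleton.mp hwx
    have hc := hker _ hw
    rw [map_smul, hx, smul_eq_mul, mul_one] at hc
    simp [hc]

section Weight

variable {χ : L →ₗ[F] F}

theorem apply_eq_zero_of_mem_lowerCentralSeries_one
    (hχ : ∀ y : L, ∀ u ∈ lowerCentralSeries F L L 1, ⁅y, u⁆ = χ y • u) {u₀ : L}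
    (hu₀ : u₀ ∈ lowerCentralSeries F L L 1) (hne : u₀ ≠ 0) {u : L}
    (hu : u ∈ lowerCentralSeries F L L 1) : χ u = 0 := by
  refine lowerCentralSeries_one_le_of_forall_lie_mem (S := LinearMap.ker χ) (fun a b => ?_) hu
  apply smul_left_injective F hne
  change χ ⁅a, b⁆ • u₀ = (0 : F) • u₀
  rw [← hχ _ _ hu₀, lie_lie, hχ b _ hu₀, hχ a _ hu₀, lie_smul, lie_smul, hχ a _ hu₀, hχ b _ hu₀,
    smul_smul, smul_smul, mul_comm, sub_self, zero_smul]

theorem lie_eq_sub_smul_of_mem_sup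
    (hχ : ∀ y : L, ∀ u ∈ lowerCentralSeries F L L 1, ⁅y, u⁆ = χ y • u)
    (hker : ∀ u ∈ lowerCentralSeries F L L 1, χ u = 0) {x : L} (hx : χ x = 1) {b : L}
    (hb : b ∈ (lowerCentralSeries F L L 1 : Submodule F L) ⊔ F ∙ x) : ⁅x, b⁆ = b - χ b • x := by
  obtain ⟨w, hw, _, hcx, rfl⟩ := Submodule.mem_sup.mp hb
  obtain ⟨c, rfl⟩ := Submodule.mem_span_singleton.mp hcx
  rw [lie_add, lie_smul, lie_self, smul_zero, add_zero, hχ x w hw, hx, one_smul, map_add,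
    map_smul, hker w hw, hx, smul_eq_mul, mul_one, zero_add, add_sub_cancel_right]

theorem ker_inf_ker_ad_le_center
    (hχ : ∀ y : L, ∀ u ∈ lowerCentralSeries F L L 1, ⁅y, u⁆ = χ y • u) {x : L} (hx : χ x = 1) :
    LinearMap.ker χ ⊓ LinearMap.ker (ad F L x) ≤ (center F L : Submodule F L) := by
  rintro a ⟨ha : χ a = 0, hxa : ⁅x, a⁆ = 0⟩
  refine (mem_maxTrivSubmodule F L L a).mpr fun y => ?_
  calc ⁅y, a⁆ = ⁅x, ⁅y, a⁆⁆ := by rw [hχ x _ (lie_mem_lowerCentralSeries_one y a), hx, one_smul]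
    _ = ⁅⁅x, y⁆, a⁆ + ⁅y, ⁅x, a⁆⁆ := leibniz_lie x y a
    _ = 0 := by
      rw [← lie_skew, hχ a _ (lie_mem_lowerCentralSeries_one x y), ha, zero_smul, neg_zero, hxa,
        lie_zero, add_zero]

theorem isCompl_ker_inf_ker_ad
    (hχ : ∀ y : L, ∀ u ∈ lowerCentralSeries F L L 1, ⁅y, u⁆ = χ y • u)
    (hker : ∀ u ∈ lowerCentralSeries F L L 1, χ u = 0) {x : L} (hx : χ x = 1) :
    IsCompl (LinearMap.ker χ ⊓ LinearMap.ker (ad F L x))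
      ((lowerCentralSeries F L L 1 : Submodule F L) ⊔ F ∙ x) := by
  constructor
  · refine Submodule.disjoint_def.mpr fun b ⟨(hb : χ b = 0), (hxb : ⁅x, b⁆ = 0)⟩ hbB => ?_
    have h := lie_eq_sub_smul_of_mem_sup hχ hker hx hbB
    rwa [hxb, hb, zero_smul, sub_zero, eq_comm] at h
  · refine codisjoint_iff.mpr (eq_top_iff.mpr fun y _ => Submodule.mem_sup.mpr
      ⟨y - χ y • x - ⁅x, y⁆, ⟨?_, ?_⟩, ⁅x, y⁆ + χ y • x, add_mem
        (Submodule.mem_sup_left (lie_mem_lowerCentralSeries_one x y))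
        (Submodule.mem_sup_right (Submodule.smul_mem _ _ (Submodule.mem_span_singleton_self x))),
        by abel⟩)
    · change χ _ = 0
      rw [map_sub, map_sub, map_smul, hx, hker _ (lie_mem_lowerCentralSeries_one x y),
        smul_eq_mul, mul_one, sub_self, sub_zero]
    · change ⁅x, _⁆ = 0
      rw [lie_sub, lie_sub, lie_smul, lie_self, smul_zero, sub_zero,
        hχ x _ (lie_mem_lowerCentralSeries_one x y), hx, one_smul, sub_self]

theorem exists_isCompl_isLieAbelian_isAlmostAbelian
    (hχ : ∀ y : L, ∀ u ∈ lowerCentralSeries F L L 1, ⁅y, u⁆ = χ y • u)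
    (hker : ∀ u ∈ lowerCentralSeries F L L 1, χ u = 0) {x : L} (hx : χ x = 1) :
    ∃ A B : LieIdeal F L, IsLieAbelian A ∧ IsAlmostAbelian F B ∧
      IsCompl (A : Submodule F L) (B : Submodule F L) := by
  set B := LieIdeal.ofLowerCentralSeriesLE _ (le_sup_left (b := F ∙ x))
  have hxB : x ∈ B := Submodule.mem_sup_right (Submodule.mem_span_singleton_self x)
  refine ⟨LieIdeal.ofLECenter _ (ker_inf_ker_ad_le_center hχ hx), B, inferInstance,
    isAlmostAbelian_of_forall_lie_eq_smul ⟨x, hxB⟩ (χ ∘ₗ (B.incl : B →ₗ[F] L)) hx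
      (fun y w hw => Subtype.ext (hχ y w (LieIdeal.coe_mem_lowerCentralSeries_one hw)))
      (fun b => Subtype.ext (lie_eq_sub_smul_of_mem_sup hχ hker hx b.2)),
    isCompl_ker_inf_ker_ad hχ hker hx⟩

end Weight

theorem DerivedLinesAreIdeals.lowerCentralSeries_two_eq_bot_or (hL : DerivedLinesAreIdeals F L) :
    lowerCentralSeries F L L 2 = ⊥ ∨ ∃ A B : LieIdeal F L, IsLieAbelian A ∧ IsAlmostAbelian F B ∧
      IsCompl (A : Submodule F L) (B : Submodule F L) := by
  obtain ⟨χ, hχ⟩ := (lowerCentralSeries F L L 1).exists_forall_lie_eq_smul hL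
  rw [or_iff_not_imp_left, lowerCentralSeries_two_eq_bot_iff]
  push Not
  rintro ⟨y₀, u₀, hu₀, hne⟩
  rw [hχ y₀ u₀ hu₀] at hne
  obtain ⟨hy₀, hu₀₀⟩ := smul_ne_zero_iff.mp hne
  exact exists_isCompl_isLieAbelian_isAlmostAbelian hχ
    (fun u hu => apply_eq_zero_of_mem_lowerCentralSeries_one hχ hu₀ hu₀₀ hu)
    (x := (χ y₀)⁻¹ • y₀) (by rw [map_smul, smul_eq_mul, inv_mul_cancel₀ hy₀])

end Field

theorem forall_one_dim_isCIdeal_iff_general {F L : Type*} [Field F] [LieRing L] [LieAlgebra F L] :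
    (∀ B : LieSubalgebra F L, Module.finrank F B = 1 → IsCIdeal F B) ↔
      (LieModule.lowerCentralSeries F L L 2 = ⊥ ∨
        ∃ A B : LieIdeal F L, IsLieAbelian A ∧ IsAlmostAbelian F B ∧
          (A : Submodule F L) ⊔ (B : Submodule F L) = ⊤ ∧
          (A : Submodule F L) ⊓ (B : Submodule F L) = ⊥) := by
  constructor
  · intro h
    obtain h3 | ⟨A, B, hA, hB, hAB⟩ :=
      (derivedLinesAreIdeals_of_forall_isCIdeal h).lowerCentralSeries_two_eq_bot_or
    · exact Or.inl h3
    · exact Or.inr ⟨A, B, hA, hB, hAB.sup_eq_top, hAB.inf_eq_bot⟩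
  · rintro (h3 | ⟨A, B, hA, hB, hsup, hinf⟩) C hC
    · exact DerivedLinesAreIdeals.isCIdeal
        (fun y u hu => by simp [lowerCentralSeries_two_eq_bot_iff.mp h3 y u hu]) hC
    · have hAB : IsCompl A B :=
        LieSubmodule.isCompl_toSubmodule.mp ⟨disjoint_iff.mpr hinf, codisjoint_iff.mpr hsup⟩
      exact (hB.derivedLinesAreIdeals.of_isCompl hAB).isCIdeal hC

/-- Every one-dimensional subalgebra of `L` is a c-ideal of `L` if and
only if `L³ = 0`, or `L = A ⊕ B` where `A` is an abelian ideal of `L` and `B` is an almost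
abelian ideal of `L`. -/
theorem forall_one_dim_isCIdeal_iff {F L : Type*} [Field F] [LieRing L] [LieAlgebra F L]
    [FiniteDimensional F L] :
    (∀ B : LieSubalgebra F L, Module.finrank F B = 1 → IsCIdeal F B) ↔
      (LieModule.lowerCentralSeries F L L 2 = ⊥ ∨
        ∃ A B : LieIdeal F L, IsLieAbelian A ∧ IsAlmostAbelian F B ∧
          (A : Submodule F L) ⊔ (B : Submodule F L) = ⊤ ∧
          (A : Submodule F L) ⊓ (B : Submodule F L) = ⊥) :=
  forall_one_dim_isCIdeal_iff_general
end

section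
/- Let L be a finite-dimensional Lie algebra over any field F in which every one-dimensional subalgebra is a c-ideal of L. Then every minimal ideal of L is one-dimensional. -/
/-! Take `0 ≠ a ∈ A` and write the c-ideal condition for `Fa` as `L = Fa + C`, `Fa ∩ C ≤ D ≤ Fa`
with `C`, `D` ideals. If `a ∈ C`, then `a ∈ D`, so `D` is a nonzero ideal inside `A`, hence
`A = D ≤ Fa`. If `a ∉ C`, minimality forces `A ∩ C = 0`, so `dim A ≤ dim L - dim C ≤ 1`. -/

theorem Submodule.finrank_le_of_disjoint_of_sup_eq_top {K V : Type*} [DivisionRing K]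
    [AddCommGroup V] [Module K V] [FiniteDimensional K V] {p q r : Submodule K V}
    (hpq : Disjoint p q) (hrq : r ⊔ q = ⊤) :
    Module.finrank K p ≤ Module.finrank K r := by
  have hpq_le := Submodule.finrank_add_finrank_le_of_disjoint hpq
  have hrq_ge := Submodule.finrank_add_le_finrank_add_finrank r q
  rw [hrq, finrank_top] at hrq_ge
  omega

namespace LieIdeal

variable {F L : Type*} [Field F] [LieRing L] [LieAlgebra F L] {A : LieIdeal F L} {a : L}

theorem disjoint_of_mem_of_notMem (hmin : ∀ I : LieIdeal F L, I ≤ A → I = ⊥ ∨ I = A)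
    (haA : a ∈ A) {C : LieIdeal F L} (haC : a ∉ C) : Disjoint A C := by
  rcases hmin (A ⊓ C) inf_le_left with hbot | heq
  · exact disjoint_iff.mpr hbot
  · exact absurd (heq.symm.le.trans inf_le_right haA) haC

theorem toSubmodule_le_span_of_mem (hmin : ∀ I : LieIdeal F L, I ≤ A → I = ⊥ ∨ I = A)
    (haA : a ∈ A) (ha0 : a ≠ 0) {D : LieIdeal F L}
    (hDa : (D : Submodule F L) ≤ Submodule.span F {a}) (haD : a ∈ D) :
    (A : Submodule F L) ≤ Submodule.span F {a} := by
  have hDA : D ≤ A := fun x hx =>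
    (Submodule.span_le.mpr (Set.singleton_subset_iff.mpr haA)) (hDa hx)
  rcases hmin D hDA with hbot | rfl
  · exact absurd ((LieSubmodule.mem_bot a).mp (hbot ▸ haD)) ha0
  · exact hDa

theorem finrank_le_one_of_isCIdeal_lineSpan [FiniteDimensional F L]
    (hmin : ∀ I : LieIdeal F L, I ≤ A → I = ⊥ ∨ I = A)
    (haA : a ∈ A) (ha0 : a ≠ 0) (hc : IsCIdeal F (lineSpan F a)) :
    Module.finrank F A ≤ 1 := by
  obtain ⟨C, hsup, D, hDa, hcore⟩ := hc
  calc Module.finrank F A ≤ Module.finrank F (Submodule.span F {a}) := by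
        by_cases haC : a ∈ C
        · have haD : a ∈ D := hcore a (Submodule.mem_span_singleton_self a) haC
          exact Submodule.finrank_mono (toSubmodule_le_span_of_mem hmin haA ha0 hDa haD)
        · exact Submodule.finrank_le_of_disjoint_of_sup_eq_top
            (LieSubmodule.disjoint_toSubmodule.mpr (disjoint_of_mem_of_notMem hmin haA haC)) hsup
    _ = 1 := finrank_span_singleton ha0

end LieIdeal

/-- If every one-dimensional subalgebra of `L` is a c-ideal of `L`,
then every minimal ideal of `L` is one-dimensional. -/
theorem minimal_ideal_finrank_eq_one {F L : Type*} [Field F] [LieRing L] [LieAlgebra F L]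
    [FiniteDimensional F L]
    (h : ∀ B : LieSubalgebra F L, Module.finrank F B = 1 → IsCIdeal F B)
    (A : LieIdeal F L) (hA : A ≠ ⊥)
    (hmin : ∀ I : LieIdeal F L, I ≤ A → I = ⊥ ∨ I = A) :
    Module.finrank F A = 1 := by
  have hA_ne : (A : Submodule F L) ≠ ⊥ := (LieSubmodule.toSubmodule_eq_bot A).not.mpr hA
  obtain ⟨a, haA, ha0⟩ := (Submodule.ne_bot_iff _).mp hA_ne
  have hle : Module.finrank F A ≤ 1 := LieIdeal.finrank_le_one_of_isCIdeal_lineSpan hmin haA ha0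
    (h (lineSpan F a) (finrank_span_singleton ha0))
  have hpos : 1 ≤ Module.finrank F A := Submodule.one_le_finrank_iff.mpr hA_ne
  omega
end

section
/- Let L be a finite-dimensional Lie algebra over a field F and let B be a retract of L, that is, there is a Lie algebra endomorphism θ : L → L such that θ(b) = b for all b ∈ B and θ(x) ∈ B for all x ∈ L. Then B is a c-ideal of L. -/
theorem isCIdeal_of_isCompl {F L : Type*} [Field F] [LieRing L] [LieAlgebra F L]
    {B : LieSubalgebra F L} {C : LieIdeal F L}
    (h : IsCompl B.toSubmodule (C : Submodule F L)) : IsCIdeal F B :=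
  ⟨C, h.sup_eq_top, ⊥, fun x hx => (LieSubmodule.mem_bot x).1 hx ▸ B.zero_mem,
    fun x hxB hxC => (LieSubmodule.mem_bot x).2 (h.disjoint.le_bot ⟨hxB, hxC⟩)⟩

theorem LieHom.isCompl_ker_of_retract {R L : Type*} [CommRing R] [LieRing L] [LieAlgebra R L]
    {B : LieSubalgebra R L} (θ : L →ₗ⁅R⁆ L) (hb : ∀ b ∈ B, θ b = b) (hx : ∀ x, θ x ∈ B) :
    IsCompl B.toSubmodule (θ.ker : Submodule R L) := by
  rw [LieIdeal.toLieSubalgebra_toSubmodule, θ.ker_toSubmodule,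
    ← LinearMap.ker_codRestrict B.toSubmodule _ hx]
  exact LinearMap.isCompl_of_proj fun b => Subtype.ext (hb b b.2)

theorem isCIdeal_of_retract_general {F L : Type*} [Field F] [LieRing L] [LieAlgebra F L]
    (B : LieSubalgebra F L) (θ : L →ₗ⁅F⁆ L)
    (hb : ∀ b ∈ B, θ b = b) (hx : ∀ x : L, θ x ∈ B) :
    IsCIdeal F B :=
  isCIdeal_of_isCompl (θ.isCompl_ker_of_retract hb hx)

/-- A retract of `L` is a c-ideal of `L`: if `θ : L → L` is a Lie
algebra endomorphism with `θ(b) = b` for all `b ∈ B` and `θ(x) ∈ B` for all `x ∈ L`,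
then `B` is a c-ideal of `L`. -/
theorem isCIdeal_of_retract {F L : Type*} [Field F] [LieRing L] [LieAlgebra F L]
    [FiniteDimensional F L] (B : LieSubalgebra F L) (θ : L →ₗ⁅F⁆ L)
    (hb : ∀ b ∈ B, θ b = b) (hx : ∀ x : L, θ x ∈ B) :
    IsCIdeal F B :=
  isCIdeal_of_retract_general B θ hb hx
end
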